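/- Let m ∈ ℝ, β > 0, and let F : (m − β, m) → ℂ be a C¹ function. Suppose there are constants B ≥ 0, p₀ ≥ 0 and p₁ ≥ 0 such that for every α ∈ (0, β): sup_{ω ∈ (m−α, m)} |F(ω)| ≤ B·(min(α, 1))^{p₀} and ∫_{m−β}^{m−α} |F'(ω)| dω ≤ B·α^{−p₁}. Then there exist C > 0 and t₀ ≥ 1, depending only on m, p₀, p₁, such that for all t ≥ t₀: (1) |∫_{m−β}^{m} e^{−itω}·F(ω) dω| ≤ C·B·t^{−(p₀+1)/(p₀+p₁+1)}; and (2) for every d with 0 < d ≤ min(β, 1), |∫_{m−β}^{m−d} e^{−itω}·F(ω) dω| ≤ C·B·t^{−1}·d^{−p₁}. -/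

import Mathlib

/-!
Split the integral at `m - α`. Near the endpoint, `|F| ≤ B α^p₀` on an interval of length `α`
gives `B α^(p₀+1)`. Away from it, one integration by parts against `e^{-itω}` gains `t⁻¹`, the
boundary terms costing `2B` and the remainder `∫ |F'| ≤ B α^(-p₁)`; since `F` need not extend to
`m - β`, this is done on compact subintervals and passed to the limit. Part (2) is the far bound
with `α = d`, and part (1) takes `α = t^(-1/(p₀+p₁+1))`, which balances the two contributions.
-/

open MeasureTheory Set Filter Topology

lemma norm_setIntegral_Ioo_le_of_forall_Ioo_le {E : Type*} [NormedAddCommGroup E]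
    [NormedSpace ℝ E] {g : ℝ → E} {a b K : ℝ} (hab : a < b) (hg : IntegrableOn g (Ioo a b))
    (h : ∀ a' b', a < a' → a' < b' → b' < b → ‖∫ x in Ioo a' b', g x‖ ≤ K) :
    ‖∫ x in Ioo a b, g x‖ ≤ K := by
  have ha : Tendsto (fun ε => a + ε) (𝓝[>] 0) (𝓝 a) :=
    tendsto_nhdsWithin_of_tendsto_nhds (by simpa using (continuous_const_add a).tendsto 0)
  have hb : Tendsto (fun ε => b - ε) (𝓝[>] 0) (𝓝 b) :=
    tendsto_nhdsWithin_of_tendsto_nhds (by simpa using (continuous_sub_left b).tendsto 0)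
  have hlim := (aecover_Ioo_of_Ioo (μ := volume) ha hb).integral_tendsto_of_countably_generated hg
  refine le_of_tendsto hlim.norm ?_
  have hsmall : ∀ᶠ ε in 𝓝[>] (0 : ℝ), ε < (b - a) / 2 :=
    nhdsWithin_le_nhds (eventually_lt_nhds (by linarith))
  filter_upwards [hsmall, self_mem_nhdsWithin] with ε hε (hε0 : 0 < ε)
  rw [Measure.restrict_restrict measurableSet_Ioo, Ioo_inter_Ioo,
    max_eq_left (by linarith), min_eq_left (by linarith)]
  exact h _ _ (by linarith) (by linarith) (by linarith)

lemma integrableOn_and_integral_norm_le_of_lintegral_le {α E : Type*} [MeasurableSpace α]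
    [NormedAddCommGroup E] {μ : Measure α} {f : α → E} {s : Set α} {K : ℝ}
    (hf : AEStronglyMeasurable f (μ.restrict s)) (hK : 0 ≤ K)
    (h : ∫⁻ x in s, ENNReal.ofReal ‖f x‖ ∂μ ≤ ENNReal.ofReal K) :
    IntegrableOn f s μ ∧ ∫ x in s, ‖f x‖ ∂μ ≤ K := by
  simp_rw [ofReal_norm] at h
  refine ⟨⟨hf, h.trans_lt ENNReal.ofReal_lt_top⟩, ?_⟩
  rw [integral_norm_eq_lintegral_enorm hf]
  exact ENNReal.toReal_le_of_le_ofReal hK h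

lemma norm_cexp_neg_I_mul (t x : ℝ) : ‖Complex.exp (-Complex.I * t * x)‖ = 1 := by
  rw [show -Complex.I * t * x = ((-(t * x) : ℝ) : ℂ) * Complex.I by push_cast; ring]
  exact Complex.norm_exp_ofReal_mul_I _

lemma hasDerivAt_cexp_neg_I_mul_div {t : ℝ} (ht : t ≠ 0) (x : ℝ) :
    HasDerivAt (fun y : ℝ => Complex.exp (-Complex.I * t * y) / (-Complex.I * t))
      (Complex.exp (-Complex.I * t * x)) x := by
  have hc : -Complex.I * t ≠ 0 := by simp [ht]
  have h := (((hasDerivAt_id (x : ℂ)).const_mul (-Complex.I * t)).cexp.comp_ofReal).div_const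
    (-Complex.I * t)
  simp only [id, mul_one] at h
  rwa [mul_div_cancel_right₀ _ hc] at h

lemma integrableOn_cexp_mul_of_norm_le {F : ℝ → ℂ} {a b t M : ℝ}
    (hF : ContinuousOn F (Ioo a b)) (hM : ∀ x ∈ Ioo a b, ‖F x‖ ≤ M) :
    IntegrableOn (fun x : ℝ => Complex.exp (-Complex.I * t * x) * F x) (Ioo a b) := by
  refine ⟨((Continuous.continuousOn (by fun_prop)).mul hF).aestronglyMeasurable measurableSet_Ioo,
    HasFiniteIntegral.restrict_of_bounded (C := M) measure_Ioo_lt_top ?_⟩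
  filter_upwards [ae_restrict_mem measurableSet_Ioo] with x hx
  rw [norm_mul, norm_cexp_neg_I_mul, one_mul]
  exact hM x hx

lemma norm_setIntegral_Ioo_cexp_mul_le_of_norm_le {F : ℝ → ℂ} {a b t M : ℝ} (hab : a ≤ b)
    (hM : ∀ x ∈ Ioo a b, ‖F x‖ ≤ M) :
    ‖∫ x in Ioo a b, Complex.exp (-Complex.I * t * x) * F x‖ ≤ M * (b - a) := by
  have h := norm_setIntegral_le_of_norm_le_const (μ := volume) measure_Ioo_lt_top
    (f := fun x : ℝ => Complex.exp (-Complex.I * t * x) * F x) fun x hx => by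
      rw [norm_mul, norm_cexp_neg_I_mul, one_mul]; exact hM x hx
  rwa [Real.volume_real_Ioo_of_le hab] at h

lemma norm_intervalIntegral_cexp_mul_le {F F' : ℝ → ℂ} {a b t M : ℝ} (hab : a ≤ b) (ht : t ≠ 0)
    (hF : ∀ x ∈ Icc a b, HasDerivAt F (F' x) x) (hF' : IntervalIntegrable F' volume a b)
    (ha : ‖F a‖ ≤ M) (hb : ‖F b‖ ≤ M) :
    ‖∫ x in a..b, Complex.exp (-Complex.I * t * x) * F x‖
      ≤ |t|⁻¹ * (2 * M + ∫ x in a..b, ‖F' x‖) := by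
  set u : ℝ → ℂ := fun y => Complex.exp (-Complex.I * t * y) / (-Complex.I * t)
  have hu : ∀ x, ‖u x‖ = |t|⁻¹ := fun x => by
    simp only [u, norm_div, norm_cexp_neg_I_mul]; simp
  have hibp := intervalIntegral.integral_mul_deriv_eq_deriv_mul
    (fun x _ => hasDerivAt_cexp_neg_I_mul_div ht x)
    (fun x hx => hF x (by rwa [uIcc_of_le hab] at hx))
    (Continuous.intervalIntegrable (by fun_prop) a b) hF'
  rw [show ∫ x in a..b, Complex.exp (-Complex.I * t * x) * F x
      = u b * F b - u a * F a - ∫ x in a..b, u x * F' x by rw [hibp]; ring]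
  have hrem : ‖∫ x in a..b, u x * F' x‖ ≤ |t|⁻¹ * ∫ x in a..b, ‖F' x‖ := by
    refine (intervalIntegral.norm_integral_le_integral_norm hab).trans_eq ?_
    simp only [norm_mul, hu, intervalIntegral.integral_const_mul]
  calc ‖u b * F b - u a * F a - ∫ x in a..b, u x * F' x‖
      ≤ ‖u b * F b‖ + ‖u a * F a‖ + ‖∫ x in a..b, u x * F' x‖ :=
        (norm_sub_le _ _).trans (by gcongr; exact norm_sub_le _ _)
    _ ≤ |t|⁻¹ * M + |t|⁻¹ * M + |t|⁻¹ * ∫ x in a..b, ‖F' x‖ := by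
        simp only [norm_mul, hu]; gcongr
    _ = |t|⁻¹ * (2 * M + ∫ x in a..b, ‖F' x‖) := by ring

lemma norm_setIntegral_Ioo_cexp_mul_le {F F' : ℝ → ℂ} {a b t M : ℝ} (hab : a < b) (ht : t ≠ 0)
    (hF : ∀ x ∈ Ioo a b, HasDerivAt F (F' x) x) (hF' : IntegrableOn F' (Ioo a b))
    (hM : ∀ x ∈ Ioo a b, ‖F x‖ ≤ M) :
    ‖∫ x in Ioo a b, Complex.exp (-Complex.I * t * x) * F x‖
      ≤ |t|⁻¹ * (2 * M + ∫ x in Ioo a b, ‖F' x‖) := by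
  refine norm_setIntegral_Ioo_le_of_forall_Ioo_le hab
    (integrableOn_cexp_mul_of_norm_le (fun x hx => (hF x hx).continuousAt.continuousWithinAt) hM)
    fun a' b' ha' hab' hb' => ?_
  have hsub : Icc a' b' ⊆ Ioo a b := Icc_subset_Ioo ha' hb'
  have hF'ab : IntervalIntegrable F' volume a' b' :=
    (hF'.mono_set (uIcc_of_le hab'.le ▸ hsub)).intervalIntegrable
  have hnorm : ∫ x in a'..b', ‖F' x‖ ≤ ∫ x in Ioo a b, ‖F' x‖ := by
    rw [intervalIntegral.integral_of_le hab'.le]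
    exact setIntegral_mono_set hF'.norm (ae_of_all _ fun _ => norm_nonneg _)
      (Ioc_subset_Icc_self.trans hsub).eventuallyLE
  rw [← integral_Ioc_eq_integral_Ioo, ← intervalIntegral.integral_of_le hab'.le]
  calc _ ≤ |t|⁻¹ * (2 * M + ∫ x in a'..b', ‖F' x‖) :=
        norm_intervalIntegral_cexp_mul_le hab'.le ht (fun x hx => hF x (hsub hx)) hF'ab
          (hM a' (hsub (left_mem_Icc.2 hab'.le))) (hM b' (hsub (right_mem_Icc.2 hab'.le)))
    _ ≤ _ := by gcongr

lemma setIntegral_Ioo_eq_add {E : Type*} [NormedAddCommGroup E] [NormedSpace ℝ E] {g : ℝ → E}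
    {a b c : ℝ} (hab : a ≤ b) (hbc : b ≤ c) (hg : IntegrableOn g (Ioo a c)) :
    ∫ x in Ioo a c, g x = (∫ x in Ioo a b, g x) + ∫ x in Ioo b c, g x := by
  have hg' : IntegrableOn g (Icc a c) := by rwa [integrableOn_Icc_iff_integrableOn_Ioo]
  simp only [← integral_Ioc_eq_integral_Ioo, ← intervalIntegral.integral_of_le, hab, hbc,
    hab.trans hbc]
  exact (intervalIntegral.integral_add_adjacent_intervals
    ((intervalIntegrable_iff_integrableOn_Icc_of_le hab).2
      (hg'.mono_set (Icc_subset_Icc_right hbc)))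
    ((intervalIntegrable_iff_integrableOn_Icc_of_le hbc).2
      (hg'.mono_set (Icc_subset_Icc_left hab)))).symm

section

variable {m β B p₀ p₁ : ℝ} {F : ℝ → ℂ}

lemma norm_le_of_forall_mem_Ioo_sub (hB : 0 ≤ B) (hp₀ : 0 ≤ p₀)
    (hsup : ∀ α ∈ Ioo 0 β, ∀ ω ∈ Ioo (m - α) m, ‖F ω‖ ≤ B * min α 1 ^ p₀) :
    ∀ ω ∈ Ioo (m - β) m, ‖F ω‖ ≤ B * min β 1 ^ p₀ := by
  rintro ω ⟨hω, hωm⟩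
  have hα : (m - ω + β) / 2 ∈ Ioo 0 β := ⟨by linarith, by linarith⟩
  refine (hsup _ hα ω ⟨by linarith, hωm⟩).trans ?_
  gcongr
  · exact le_min hα.1.le zero_le_one
  · exact hα.2.le

lemma norm_le_const_of_forall_mem_Ioo_sub (hβ : 0 < β) (hB : 0 ≤ B) (hp₀ : 0 ≤ p₀)
    (hsup : ∀ α ∈ Ioo 0 β, ∀ ω ∈ Ioo (m - α) m, ‖F ω‖ ≤ B * min α 1 ^ p₀) :
    ∀ ω ∈ Ioo (m - β) m, ‖F ω‖ ≤ B := fun ω hω =>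
  (norm_le_of_forall_mem_Ioo_sub hB hp₀ hsup ω hω).trans
    (mul_le_of_le_one_right hB (Real.rpow_le_one (by positivity) (min_le_right _ _) hp₀))

lemma norm_setIntegral_Ioo_sub_le (hB : 0 ≤ B) (hp₁ : 0 ≤ p₁)
    (hF : ContDiffOn ℝ 1 F (Ioo (m - β) m)) (hFB : ∀ ω ∈ Ioo (m - β) m, ‖F ω‖ ≤ B)
    {α t : ℝ} (hα : α ∈ Ioo 0 β) (hα1 : α ≤ 1) (ht : 0 < t)
    (hder : ∫⁻ ω in Ioo (m - β) (m - α), ENNReal.ofReal ‖deriv F ω‖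
      ≤ ENNReal.ofReal (B * α ^ (-p₁))) :
    ‖∫ ω in Ioo (m - β) (m - α), Complex.exp (-Complex.I * t * ω) * F ω‖
      ≤ 3 * B * t⁻¹ * α ^ (-p₁) := by
  have hsub : Ioo (m - β) (m - α) ⊆ Ioo (m - β) m :=
    Ioo_subset_Ioo_right (by linarith [hα.1])
  have hderiv : ∀ x ∈ Ioo (m - β) (m - α), HasDerivAt F (deriv F x) x := fun x hx =>
    ((hF.differentiableOn one_ne_zero).differentiableAt (isOpen_Ioo.mem_nhds (hsub hx))).hasDerivAt
  have hαp : 1 ≤ α ^ (-p₁) :=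
    Real.one_le_rpow_of_pos_of_le_one_of_nonpos hα.1 hα1 (neg_nonpos.2 hp₁)
  obtain ⟨hint, hL⟩ := integrableOn_and_integral_norm_le_of_lintegral_le
    (aestronglyMeasurable_deriv F _) (by positivity) hder
  calc _ ≤ |t|⁻¹ * (2 * B + ∫ x in Ioo (m - β) (m - α), ‖deriv F x‖) :=
        norm_setIntegral_Ioo_cexp_mul_le (by linarith [hα.2]) ht.ne' hderiv hint
          fun x hx => hFB x (hsub hx)
    _ ≤ t⁻¹ * (2 * B * α ^ (-p₁) + B * α ^ (-p₁)) := by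
        rw [abs_of_pos ht]; gcongr t⁻¹ * (?_ + ?_); nlinarith
    _ = 3 * B * t⁻¹ * α ^ (-p₁) := by ring

lemma norm_setIntegral_le_rpow (hp₀ : 0 ≤ p₀) (hp₁ : 0 ≤ p₁) (hβ : 0 < β) (hB : 0 ≤ B)
    (hF : ContDiffOn ℝ 1 F (Ioo (m - β) m))
    (hsup : ∀ α ∈ Ioo 0 β, ∀ ω ∈ Ioo (m - α) m, ‖F ω‖ ≤ B * min α 1 ^ p₀)
    (hder : ∀ α ∈ Ioo 0 β, ∫⁻ ω in Ioo (m - β) (m - α), ENNReal.ofReal ‖deriv F ω‖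
      ≤ ENNReal.ofReal (B * α ^ (-p₁)))
    {t : ℝ} (ht : 1 ≤ t) :
    ‖∫ ω in Ioo (m - β) m, Complex.exp (-Complex.I * t * ω) * F ω‖
      ≤ 4 * B * t ^ (-(p₀ + 1) / (p₀ + p₁ + 1)) := by
  have ht0 : 0 < t := one_pos.trans_le ht
  have hp : 0 < p₀ + p₁ + 1 := by linarith
  set A := t ^ (-(p₀ + p₁ + 1)⁻¹)
  have hA0 : 0 < A := Real.rpow_pos_of_pos ht0 _
  have hA1 : A ≤ 1 := Real.rpow_le_one_of_one_le_of_nonpos ht (by simp [hp.le])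
  have hnear : A ^ (p₀ + 1) = t ^ (-(p₀ + 1) / (p₀ + p₁ + 1)) := by
    rw [← Real.rpow_mul ht0.le]; congr 1; field_simp
  have hfar : t⁻¹ * A ^ (-p₁) = t ^ (-(p₀ + 1) / (p₀ + p₁ + 1)) := by
    rw [← Real.rpow_mul ht0.le, ← Real.rpow_neg_one t, ← Real.rpow_add ht0]
    congr 1; field_simp; ring
  have hFβ := norm_le_of_forall_mem_Ioo_sub hB hp₀ hsup
  rcases le_or_gt β A with hβA | hAβ
  · have hβ1 : min β 1 = β := min_eq_left (hβA.trans hA1)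
    calc _ ≤ B * min β 1 ^ p₀ * (m - (m - β)) :=
          norm_setIntegral_Ioo_cexp_mul_le_of_norm_le (by linarith) hFβ
      _ = B * β ^ (p₀ + 1) := by rw [hβ1, Real.rpow_add_one hβ.ne']; ring
      _ ≤ B * A ^ (p₀ + 1) := by gcongr
      _ ≤ 4 * B * t ^ (-(p₀ + 1) / (p₀ + p₁ + 1)) := by
          rw [hnear]; nlinarith [Real.rpow_nonneg ht0.le (-(p₀ + 1) / (p₀ + p₁ + 1))]
  · have hFB := norm_le_const_of_forall_mem_Ioo_sub hβ hB hp₀ hsup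
    rw [setIntegral_Ioo_eq_add (by linarith : m - β ≤ m - A) (by linarith)
      (integrableOn_cexp_mul_of_norm_le hF.continuousOn hFB)]
    calc _ ≤ 3 * B * t⁻¹ * A ^ (-p₁) + B * min A 1 ^ p₀ * (m - (m - A)) :=
          norm_add_le_of_le (norm_setIntegral_Ioo_sub_le hB hp₁ hF hFB ⟨hA0, hAβ⟩ hA1 ht0
            (hder A ⟨hA0, hAβ⟩)) (norm_setIntegral_Ioo_cexp_mul_le_of_norm_le (by linarith)
            (hsup A ⟨hA0, hAβ⟩))
      _ = 3 * B * (t⁻¹ * A ^ (-p₁)) + B * A ^ (p₀ + 1) := by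
          rw [min_eq_left hA1, Real.rpow_add_one hA0.ne']; ring
      _ = 4 * B * t ^ (-(p₀ + 1) / (p₀ + p₁ + 1)) := by rw [hfar, hnear]; ring

end

theorem statement15 (m p₀ p₁ : ℝ) (hp₀ : 0 ≤ p₀) (hp₁ : 0 ≤ p₁) :
    ∃ C t₀ : ℝ, 0 < C ∧ 1 ≤ t₀ ∧
      ∀ β : ℝ, 0 < β → ∀ B : ℝ, 0 ≤ B →
      ∀ F : ℝ → ℂ, ContDiffOn ℝ 1 F (Set.Ioo (m - β) m) →
      (∀ α : ℝ, α ∈ Set.Ioo 0 β →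
        (∀ ω ∈ Set.Ioo (m - α) m, ‖F ω‖ ≤ B * (min α 1) ^ p₀) ∧
        (∫⁻ ω in Set.Ioo (m - β) (m - α), ENNReal.ofReal ‖deriv F ω‖)
          ≤ ENNReal.ofReal (B * α ^ (-p₁))) →
      ∀ t : ℝ, t₀ ≤ t →
        (‖∫ ω in Set.Ioo (m - β) m, Complex.exp (-Complex.I * (t : ℂ) * (ω : ℂ)) * F ω‖
          ≤ C * B * t ^ (-(p₀ + 1) / (p₀ + p₁ + 1))) ∧
        ∀ d : ℝ, 0 < d → d ≤ min β 1 →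
          ‖∫ ω in Set.Ioo (m - β) (m - d), Complex.exp (-Complex.I * (t : ℂ) * (ω : ℂ)) * F ω‖
            ≤ C * B * t⁻¹ * d ^ (-p₁) := by
  refine ⟨4, 1, by norm_num, le_rfl, fun β hβ B hB F hF hyp t ht => ?_⟩
  have hsup := fun α hα => (hyp α hα).1
  have hder := fun α hα => (hyp α hα).2
  refine ⟨norm_setIntegral_le_rpow hp₀ hp₁ hβ hB hF hsup hder ht, fun d hd hdβ => ?_⟩
  have hd1 : d ≤ 1 := hdβ.trans (min_le_right _ _)
  rcases (hdβ.trans (min_le_left _ _)).eq_or_lt with rfl | hdβ'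
  · simp only [Ioo_self, Measure.restrict_empty, integral_zero_measure, norm_zero]
    positivity
  · refine (norm_setIntegral_Ioo_sub_le hB hp₁ hF
      (norm_le_const_of_forall_mem_Ioo_sub hβ hB hp₀ hsup) ⟨hd, hdβ'⟩ hd1 (one_pos.trans_le ht)
      (hder d ⟨hd, hdβ'⟩)).trans ?_
    gcongr
    norm_num
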